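/- arXiv:2405.13176 — 3 statements merged into one kernel-verified Lean document; each statement's English description precedes it below -/
import Mathlib

section
/- For every finite simple graph G, the cardinality of the closed neighborhood of diadem(G) satisfies |N[diadem(G)]| = β(G) + |nucleus(G)| − d(G). -/
namespace AlmostBipartite

variable {V : Type*}

/-- The (open) neighborhood `N(X)` of a set of vertices: all vertices having a neighbor in `X`. -/
def nbhd (G : SimpleGraph V) (X : Set V) : Set V := {v | ∃ x ∈ X, G.Adj v x}

/-- The closed neighborhood `N[X] = X ∪ N(X)`. -/
def closedNbhd (G : SimpleGraph V) (X : Set V) : Set V := X ∪ nbhd G X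

/-- A set of vertices is independent: no two of its vertices are adjacent. -/
def IsIndepSet (G : SimpleGraph V) (S : Set V) : Prop :=
  ∀ ⦃a⦄, a ∈ S → ∀ ⦃b⦄, b ∈ S → ¬G.Adj a b

/-- The difference `d(X) = |X| - |N(X)|`. -/
noncomputable def diffOf (G : SimpleGraph V) (X : Set V) : ℤ :=
  (X.ncard : ℤ) - ((nbhd G X).ncard : ℤ)

/-- The critical difference `d(G)`: maximum of `d(I)` over independent sets `I`. -/
noncomputable def critDiff (G : SimpleGraph V) : ℤ :=
  sSup (diffOf G '' {S | IsIndepSet G S})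

/-- A critical independent set: an independent set `A` with `d(A) = d(G)`. -/
def IsCritIndep (G : SimpleGraph V) (A : Set V) : Prop :=
  IsIndepSet G A ∧ diffOf G A = critDiff G

/-- `diadem G` is the union of all critical independent sets of `G`. -/
def diadem (G : SimpleGraph V) : Set V := ⋃₀ {A | IsCritIndep G A}

/-- A maximum critical independent set: a critical independent set of maximum cardinality. -/
def IsMaxCritIndep (G : SimpleGraph V) (A : Set V) : Prop :=
  IsCritIndep G A ∧ ∀ B : Set V, IsCritIndep G B → B.ncard ≤ A.ncard

/-- `nucleus G` is the intersection of all maximum critical independent sets of `G`. -/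
def nucleus (G : SimpleGraph V) : Set V := ⋂₀ {A | IsMaxCritIndep G A}

/-- The independence number `α(G)`. -/
noncomputable def indepNum (G : SimpleGraph V) : ℕ :=
  sSup {n | ∃ S : Set V, IsIndepSet G S ∧ S.ncard = n}

/-- The critical independence number `α'(G)`: cardinality of a maximum critical independent set. -/
noncomputable def critIndepNum (G : SimpleGraph V) : ℕ :=
  sSup {n | ∃ S : Set V, IsCritIndep G S ∧ S.ncard = n}

/-- A maximum independent set. -/
def IsMaxIndep (G : SimpleGraph V) (S : Set V) : Prop :=
  IsIndepSet G S ∧ S.ncard = indepNum G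

/-- `corona G` is the union of all maximum independent sets of `G`. -/
def corona (G : SimpleGraph V) : Set V := ⋃₀ {S | IsMaxIndep G S}

/-- `core G` is the intersection of all maximum independent sets of `G`. -/
def core (G : SimpleGraph V) : Set V := ⋂₀ {S | IsMaxIndep G S}

/-- The matching number `μ(G)`: maximum size of a matching in `G`. -/
noncomputable def matchNum (G : SimpleGraph V) : ℕ :=
  sSup {n | ∃ M : SimpleGraph.Subgraph G, M.IsMatching ∧ M.edgeSet.ncard = n}

/-- `G` is a König-Egerváry graph if `α(G) + μ(G) = n(G)`. -/
def KonigEgervary (G : SimpleGraph V) : Prop :=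
  indepNum G + matchNum G = Nat.card V

/-- A closed walk which is an odd cycle. -/
def IsOddCycleWalk (G : SimpleGraph V) {u : V} (c : G.Walk u u) : Prop :=
  c.IsCycle ∧ Odd c.length

/-- `c` is the unique odd cycle of `G`: it is an odd cycle, and every odd cycle of `G`
has the same edge set as `c`.  A graph admitting such `c` is almost bipartite. -/
def IsUniqueOddCycle (G : SimpleGraph V) {u : V} (c : G.Walk u u) : Prop :=
  IsOddCycleWalk G c ∧
    ∀ (w : V) (c' : G.Walk w w), IsOddCycleWalk G c' →
      {e | e ∈ c'.edges} = {e | e ∈ c.edges}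

/-- The vertex-deleted subgraph `G - v`. -/
def deleteVert (G : SimpleGraph V) (v : V) := G.induce {w | w ≠ v}

/-- `ϱ_v(G)`: the number of vertices `v` such that `G - v` is a König-Egerváry graph. -/
noncomputable def rhoV (G : SimpleGraph V) : ℕ :=
  {v : V | KonigEgervary (deleteVert G v)}.ncard

end AlmostBipartite

open AlmostBipartite

section Helpers

variable {V : Type*} [Fintype V] {G : SimpleGraph V}

lemma nbhd_mono {X Y : Set V} (h : X ⊆ Y) : nbhd G X ⊆ nbhd G Y := by
  rintro v ⟨x, hx, ha⟩; exact ⟨x, h hx, ha⟩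

lemma nbhd_union (X Y : Set V) : nbhd G (X ∪ Y) = nbhd G X ∪ nbhd G Y := by
  ext v
  constructor
  · rintro ⟨x, hx | hx, ha⟩
    · exact Or.inl ⟨x, hx, ha⟩
    · exact Or.inr ⟨x, hx, ha⟩
  · rintro (⟨x, hx, ha⟩ | ⟨x, hx, ha⟩)
    · exact ⟨x, Or.inl hx, ha⟩
    · exact ⟨x, Or.inr hx, ha⟩

lemma indep_mono {S T : Set V} (h : T ⊆ S) (hS : IsIndepSet G S) : IsIndepSet G T :=
  fun _ ha _ hb => hS (h ha) (h hb)

lemma indep_diffOf_le {S : Set V} (hS : IsIndepSet G S) : diffOf G S ≤ critDiff G :=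
  le_csSup ((Set.toFinite {S : Set V | IsIndepSet G S}).image (diffOf G)).bddAbove
    ⟨S, hS, rfl⟩

lemma exists_crit : ∃ A : Set V, IsCritIndep G A := by
  have hne : (diffOf G '' {S : Set V | IsIndepSet G S}).Nonempty :=
    ⟨diffOf G ∅, ∅, fun a ha => absurd ha (Set.notMem_empty a), rfl⟩
  obtain ⟨A, hA, hd⟩ :=
    hne.csSup_mem ((Set.toFinite {S : Set V | IsIndepSet G S}).image (diffOf G))
  exact ⟨A, hA, hd⟩

lemma diffOf_le_critDiff (X : Set V) : diffOf G X ≤ critDiff G := by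
  have hindep : IsIndepSet G (X \ nbhd G X) := by
    intro a ha b hb hab
    exact ha.2 ⟨b, hb.1, hab⟩
  have hsub : nbhd G (X \ nbhd G X) ⊆ nbhd G X \ X := by
    rintro v ⟨y, hy, ha⟩
    exact ⟨⟨y, hy.1, ha⟩, fun hvX => hy.2 ⟨v, hvX, ha.symm⟩⟩
  have n1 : (X \ nbhd G X).ncard + (X ∩ nbhd G X).ncard = X.ncard := by
    rw [← Set.diff_self_inter]
    exact Set.ncard_diff_add_ncard_of_subset Set.inter_subset_left (Set.toFinite _)
  have n2 : (nbhd G X \ X).ncard + (nbhd G X ∩ X).ncard = (nbhd G X).ncard := by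
    rw [← Set.diff_self_inter]
    exact Set.ncard_diff_add_ncard_of_subset Set.inter_subset_left (Set.toFinite _)
  have n3 : (nbhd G (X \ nbhd G X)).ncard ≤ (nbhd G X \ X).ncard :=
    Set.ncard_le_ncard hsub (Set.toFinite _)
  have n4 : (X ∩ nbhd G X).ncard = (nbhd G X ∩ X).ncard := by rw [Set.inter_comm]
  have key : diffOf G X ≤ diffOf G (X \ nbhd G X) := by
    unfold diffOf
    have n1' : ((X \ nbhd G X).ncard : ℤ) + ((X ∩ nbhd G X).ncard : ℤ) = (X.ncard : ℤ) := by
      exact_mod_cast n1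
    have n2' : ((nbhd G X \ X).ncard : ℤ) + ((nbhd G X ∩ X).ncard : ℤ)
        = ((nbhd G X).ncard : ℤ) := by exact_mod_cast n2
    have n3' : ((nbhd G (X \ nbhd G X)).ncard : ℤ) ≤ ((nbhd G X \ X).ncard : ℤ) := by
      exact_mod_cast n3
    have n4' : ((X ∩ nbhd G X).ncard : ℤ) = ((nbhd G X ∩ X).ncard : ℤ) := by exact_mod_cast n4
    linarith
  exact key.trans (indep_diffOf_le hindep)

lemma supermod (A B : Set V) :
    diffOf G A + diffOf G B ≤ diffOf G (A ∪ B) + diffOf G (A ∩ B) := by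
  have e1 : ((A ∪ B).ncard : ℤ) + ((A ∩ B).ncard : ℤ) = (A.ncard : ℤ) + (B.ncard : ℤ) := by
    exact_mod_cast Set.ncard_union_add_ncard_inter A B (Set.toFinite _) (Set.toFinite _)
  have e2 : ((nbhd G (A ∪ B)).ncard : ℤ) = ((nbhd G A ∪ nbhd G B).ncard : ℤ) := by
    rw [nbhd_union]
  have e3 : ((nbhd G A ∪ nbhd G B).ncard : ℤ) + ((nbhd G A ∩ nbhd G B).ncard : ℤ)
      = ((nbhd G A).ncard : ℤ) + ((nbhd G B).ncard : ℤ) := by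
    exact_mod_cast Set.ncard_union_add_ncard_inter _ _ (Set.toFinite _) (Set.toFinite _)
  have e4 : ((nbhd G (A ∩ B)).ncard : ℤ) ≤ ((nbhd G A ∩ nbhd G B).ncard : ℤ) := by
    have h : nbhd G (A ∩ B) ⊆ nbhd G A ∩ nbhd G B :=
      Set.subset_inter (nbhd_mono Set.inter_subset_left) (nbhd_mono Set.inter_subset_right)
    exact_mod_cast Set.ncard_le_ncard h (Set.toFinite _)
  unfold diffOf
  linarith

lemma inter_crit {A B : Set V} (hA : IsCritIndep G A) (hB : IsCritIndep G B) :
    IsCritIndep G (A ∩ B) ∧ nbhd G (A ∩ B) = nbhd G A ∩ nbhd G B := by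
  have hiI : IsIndepSet G (A ∩ B) := indep_mono Set.inter_subset_left hA.1
  have h1 : diffOf G (A ∪ B) ≤ critDiff G := diffOf_le_critDiff _
  have h2 : diffOf G (A ∩ B) ≤ critDiff G := indep_diffOf_le hiI
  have h3 := supermod (G := G) A B
  have hAd := hA.2
  have hBd := hB.2
  have hiC : diffOf G (A ∩ B) = critDiff G := by linarith
  have huC : diffOf G (A ∪ B) = critDiff G := by linarith
  refine ⟨⟨hiI, hiC⟩, ?_⟩
  have hsub : nbhd G (A ∩ B) ⊆ nbhd G A ∩ nbhd G B :=
    Set.subset_inter (nbhd_mono Set.inter_subset_left) (nbhd_mono Set.inter_subset_right)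
  have e1 : ((A ∪ B).ncard : ℤ) + ((A ∩ B).ncard : ℤ) = (A.ncard : ℤ) + (B.ncard : ℤ) := by
    exact_mod_cast Set.ncard_union_add_ncard_inter A B (Set.toFinite _) (Set.toFinite _)
  have e2 : ((nbhd G (A ∪ B)).ncard : ℤ) = ((nbhd G A ∪ nbhd G B).ncard : ℤ) := by
    rw [nbhd_union]
  have e3 : ((nbhd G A ∪ nbhd G B).ncard : ℤ) + ((nbhd G A ∩ nbhd G B).ncard : ℤ)
      = ((nbhd G A).ncard : ℤ) + ((nbhd G B).ncard : ℤ) := by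
    exact_mod_cast Set.ncard_union_add_ncard_inter _ _ (Set.toFinite _) (Set.toFinite _)
  unfold diffOf at hiC huC hAd hBd
  have hcard : ((nbhd G A ∩ nbhd G B).ncard : ℤ) ≤ ((nbhd G (A ∩ B)).ncard : ℤ) := by
    linarith
  exact Set.eq_of_subset_of_ncard_le hsub (by exact_mod_cast hcard) (Set.toFinite _)

lemma hall {A S : Set V} (hA : IsCritIndep G A) (hS : S ⊆ nbhd G A) :
    (S.ncard : ℤ) ≤ ((A ∩ nbhd G S).ncard : ℤ) := by
  have hindep : IsIndepSet G (A \ nbhd G S) := indep_mono Set.diff_subset hA.1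
  have hsub : nbhd G (A \ nbhd G S) ⊆ nbhd G A \ S := by
    rintro v ⟨a, ha, hadj⟩
    exact ⟨⟨a, ha.1, hadj⟩, fun hvS => ha.2 ⟨v, hvS, hadj.symm⟩⟩
  have n1 : ((A \ nbhd G S).ncard : ℤ) + ((A ∩ nbhd G S).ncard : ℤ) = (A.ncard : ℤ) := by
    have : (A \ nbhd G S).ncard + (A ∩ nbhd G S).ncard = A.ncard := by
      rw [← Set.diff_self_inter]
      exact Set.ncard_diff_add_ncard_of_subset Set.inter_subset_left (Set.toFinite _)
    exact_mod_cast this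
  have n2 : ((nbhd G (A \ nbhd G S)).ncard : ℤ) ≤ ((nbhd G A \ S).ncard : ℤ) := by
    exact_mod_cast Set.ncard_le_ncard hsub (Set.toFinite _)
  have n3 : ((nbhd G A \ S).ncard : ℤ) + (S.ncard : ℤ) = ((nbhd G A).ncard : ℤ) := by
    exact_mod_cast Set.ncard_diff_add_ncard_of_subset hS (Set.toFinite _)
  have n4 : diffOf G (A \ nbhd G S) ≤ critDiff G := indep_diffOf_le hindep
  rw [← hA.2] at n4
  unfold diffOf at n4
  linarith

lemma crit_pair_card {A B : Set V} (hA : IsCritIndep G A) (hB : IsCritIndep G B) :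
    (A ∩ nbhd G B).ncard = (B ∩ nbhd G A).ncard := by
  have key : ∀ (A B : Set V), IsCritIndep G A → IsCritIndep G B →
      ((B ∩ nbhd G A).ncard : ℤ) ≤ ((A ∩ nbhd G B).ncard : ℤ) := by
    intro A B hA hB
    have h1 := hall (S := B ∩ nbhd G A) hA Set.inter_subset_right
    have h2 : A ∩ nbhd G (B ∩ nbhd G A) ⊆ A ∩ nbhd G B :=
      Set.inter_subset_inter_right _ (nbhd_mono Set.inter_subset_left)
    have h3 : ((A ∩ nbhd G (B ∩ nbhd G A)).ncard : ℤ) ≤ ((A ∩ nbhd G B).ncard : ℤ) := by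
      exact_mod_cast Set.ncard_le_ncard h2 (Set.toFinite _)
    linarith
  have hab := key A B hA hB
  have hba := key B A hB hA
  exact_mod_cast le_antisymm hba hab

lemma crit_pair_nbS {A B : Set V} (hA : IsCritIndep G A) (hB : IsCritIndep G B) :
    A ∩ nbhd G (B ∩ nbhd G A) = A ∩ nbhd G B := by
  have h2 : A ∩ nbhd G (B ∩ nbhd G A) ⊆ A ∩ nbhd G B :=
    Set.inter_subset_inter_right _ (nbhd_mono Set.inter_subset_left)
  apply Set.eq_of_subset_of_ncard_le h2 ?_ (Set.toFinite _)
  have h1 := hall (S := B ∩ nbhd G A) hA Set.inter_subset_right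
  have h3 : ((A ∩ nbhd G B).ncard : ℤ) = ((B ∩ nbhd G A).ncard : ℤ) := by
    exact_mod_cast crit_pair_card hA hB
  have : ((A ∩ nbhd G B).ncard : ℤ) ≤ ((A ∩ nbhd G (B ∩ nbhd G A)).ncard : ℤ) := by linarith
  exact_mod_cast this

lemma crit_pair_nbhd_diff {A B : Set V} (hA : IsCritIndep G A) (hB : IsCritIndep G B) :
    nbhd G (A \ nbhd G B) = nbhd G A \ (B ∩ nbhd G A) := by
  have hsub : nbhd G (A \ nbhd G B) ⊆ nbhd G A \ (B ∩ nbhd G A) := by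
    rintro v ⟨a, ha, hadj⟩
    refine ⟨⟨a, ha.1, hadj⟩, fun hv => ?_⟩
    have hmem : a ∈ A ∩ nbhd G (B ∩ nbhd G A) := ⟨ha.1, ⟨v, hv, hadj.symm⟩⟩
    rw [crit_pair_nbS hA hB] at hmem
    exact ha.2 hmem.2
  apply (Set.eq_of_subset_of_ncard_le hsub ?_ (Set.toFinite _))
  have n0 : diffOf G (A \ nbhd G B) ≤ critDiff G :=
    indep_diffOf_le (indep_mono Set.diff_subset hA.1)
  rw [← hA.2] at n0
  unfold diffOf at n0
  have n1 : ((A \ nbhd G B).ncard : ℤ) + ((A ∩ nbhd G B).ncard : ℤ) = (A.ncard : ℤ) := by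
    have : (A \ nbhd G B).ncard + (A ∩ nbhd G B).ncard = A.ncard := by
      rw [← Set.diff_self_inter]
      exact Set.ncard_diff_add_ncard_of_subset Set.inter_subset_left (Set.toFinite _)
    exact_mod_cast this
  have n2 : ((nbhd G A \ (B ∩ nbhd G A)).ncard : ℤ) + ((B ∩ nbhd G A).ncard : ℤ)
      = ((nbhd G A).ncard : ℤ) := by
    exact_mod_cast Set.ncard_diff_add_ncard_of_subset Set.inter_subset_right (Set.toFinite _)
  have n3 : ((A ∩ nbhd G B).ncard : ℤ) = ((B ∩ nbhd G A).ncard : ℤ) := by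
    exact_mod_cast crit_pair_card hA hB
  have : ((nbhd G A \ (B ∩ nbhd G A)).ncard : ℤ) ≤ ((nbhd G (A \ nbhd G B)).ncard : ℤ) := by
    linarith
  exact_mod_cast this

lemma union_crit {A B : Set V} (hA : IsCritIndep G A) (hB : IsCritIndep G B) :
    IsCritIndep G ((A \ nbhd G B) ∪ B) ∧
      (((A \ nbhd G B) ∪ B).ncard : ℤ)
        = (A.ncard : ℤ) - ((A ∩ nbhd G B).ncard : ℤ) + (B.ncard : ℤ) - ((A ∩ B).ncard : ℤ) := by
  have hind : IsIndepSet G ((A \ nbhd G B) ∪ B) := by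
    rintro a (ha | ha) b (hb | hb) hadj
    · exact hA.1 ha.1 hb.1 hadj
    · exact ha.2 ⟨b, hb, hadj⟩
    · exact hb.2 ⟨a, ha, hadj.symm⟩
    · exact hB.1 ha hb hadj
  have hNW : nbhd G ((A \ nbhd G B) ∪ B) = (nbhd G A ∪ nbhd G B) \ (B ∩ nbhd G A) := by
    rw [nbhd_union, crit_pair_nbhd_diff hA hB]
    ext v
    constructor
    · rintro (⟨hvA, hvS⟩ | hvB)
      · exact ⟨Or.inl hvA, hvS⟩
      · refine ⟨Or.inr hvB, fun hv => ?_⟩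
        obtain ⟨b, hb, hadj⟩ := hvB
        exact hB.1 hv.1 hb hadj
    · rintro ⟨hvAB | hvB, hvS⟩
      · exact Or.inl ⟨hvAB, hvS⟩
      · exact Or.inr hvB
  have hABeq : (A \ nbhd G B) ∩ B = A ∩ B := by
    ext x
    constructor
    · rintro ⟨⟨hxA, -⟩, hxB⟩; exact ⟨hxA, hxB⟩
    · rintro ⟨hxA, hxB⟩
      refine ⟨⟨hxA, fun hx => ?_⟩, hxB⟩
      obtain ⟨b, hb, hadj⟩ := hx
      exact hB.1 hxB hb hadj
  have c1 : ((A \ nbhd G B).ncard : ℤ) + ((A ∩ nbhd G B).ncard : ℤ) = (A.ncard : ℤ) := by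
    have : (A \ nbhd G B).ncard + (A ∩ nbhd G B).ncard = A.ncard := by
      rw [← Set.diff_self_inter]
      exact Set.ncard_diff_add_ncard_of_subset Set.inter_subset_left (Set.toFinite _)
    exact_mod_cast this
  have c2 : (((A \ nbhd G B) ∪ B).ncard : ℤ) + ((A ∩ B).ncard : ℤ)
      = ((A \ nbhd G B).ncard : ℤ) + (B.ncard : ℤ) := by
    have h := Set.ncard_union_add_ncard_inter (A \ nbhd G B) B (Set.toFinite _) (Set.toFinite _)
    rw [hABeq] at h
    exact_mod_cast h
  have hcard : (((A \ nbhd G B) ∪ B).ncard : ℤ)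
      = (A.ncard : ℤ) - ((A ∩ nbhd G B).ncard : ℤ) + (B.ncard : ℤ) - ((A ∩ B).ncard : ℤ) := by
    linarith
  have hSBsub : B ∩ nbhd G A ⊆ nbhd G A ∪ nbhd G B := fun x hx => Or.inl hx.2
  have c3 : (((nbhd G A ∪ nbhd G B) \ (B ∩ nbhd G A)).ncard : ℤ) + ((B ∩ nbhd G A).ncard : ℤ)
      = ((nbhd G A ∪ nbhd G B).ncard : ℤ) := by
    exact_mod_cast Set.ncard_diff_add_ncard_of_subset hSBsub (Set.toFinite _)
  have c4 : ((nbhd G A ∪ nbhd G B).ncard : ℤ) + ((nbhd G A ∩ nbhd G B).ncard : ℤ)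
      = ((nbhd G A).ncard : ℤ) + ((nbhd G B).ncard : ℤ) := by
    exact_mod_cast Set.ncard_union_add_ncard_inter _ _ (Set.toFinite _) (Set.toFinite _)
  obtain ⟨hiC, hNint⟩ := inter_crit hA hB
  have hiCd := hiC.2
  have hcc : ((A ∩ nbhd G B).ncard : ℤ) = ((B ∩ nbhd G A).ncard : ℤ) := by
    exact_mod_cast crit_pair_card hA hB
  have hAd := hA.2
  have hBd := hB.2
  have hdW : diffOf G ((A \ nbhd G B) ∪ B) = critDiff G := by
    unfold diffOf at hiCd hAd hBd ⊢
    rw [hNW]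
    rw [hNint] at hiCd
    linarith
  exact ⟨⟨hind, hdW⟩, hcard⟩

lemma exists_maxcrit : ∃ M : Set V, IsMaxCritIndep G M := by
  obtain ⟨A, hA⟩ := exists_crit (G := G)
  have hfin : (Set.ncard '' {S : Set V | IsCritIndep G S}).Finite :=
    (Set.toFinite _).image _
  have hne : (Set.ncard '' {S : Set V | IsCritIndep G S}).Nonempty := ⟨A.ncard, A, hA, rfl⟩
  obtain ⟨M, hM, hMc⟩ := hne.csSup_mem hfin
  refine ⟨M, hM, fun B hB => ?_⟩
  rw [hMc]
  exact le_csSup hfin.bddAbove ⟨B, hB, rfl⟩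

lemma decomp {M B : Set V} (hM : IsMaxCritIndep G M) (hB : IsCritIndep G B) :
    (B ∩ nbhd G M) ∪ (B ∩ M) = B ∧
      (B.ncard : ℤ) = ((B ∩ nbhd G M).ncard : ℤ) + ((B ∩ M).ncard : ℤ) := by
  obtain ⟨hWcrit, hWcard⟩ := union_crit hB hM.1
  have hle : (((B \ nbhd G M) ∪ M).ncard : ℤ) ≤ (M.ncard : ℤ) := by
    exact_mod_cast hM.2 _ hWcrit
  have h1 : (B.ncard : ℤ) ≤ ((B ∩ nbhd G M).ncard : ℤ) + ((B ∩ M).ncard : ℤ) := by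
    linarith
  have hdisj : Disjoint (B ∩ nbhd G M) (B ∩ M) := by
    rw [Set.disjoint_left]
    rintro x ⟨hxB, hxN⟩ ⟨-, hxM⟩
    obtain ⟨m, hm, hadj⟩ := hxN
    exact hM.1.1 hxM hm hadj
  have hsub : (B ∩ nbhd G M) ∪ (B ∩ M) ⊆ B := by
    rintro x (hx | hx)
    exacts [hx.1, hx.1]
  have hcu : ((B ∩ nbhd G M) ∪ (B ∩ M)).ncard = (B ∩ nbhd G M).ncard + (B ∩ M).ncard :=
    Set.ncard_union_eq hdisj (Set.toFinite _) (Set.toFinite _)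
  have heq : (B ∩ nbhd G M) ∪ (B ∩ M) = B := by
    apply Set.eq_of_subset_of_ncard_le hsub ?_ (Set.toFinite _)
    rw [hcu]
    exact_mod_cast h1
  refine ⟨heq, ?_⟩
  rw [heq] at hcu
  exact_mod_cast hcu

lemma exists_max_superset {M B : Set V} (hM : IsMaxCritIndep G M) (hB : IsCritIndep G B) :
    ∃ W : Set V, IsMaxCritIndep G W ∧ B ⊆ W := by
  obtain ⟨hWcrit, hWcard⟩ := union_crit hM.1 hB
  have hcc : ((M ∩ nbhd G B).ncard : ℤ) = ((B ∩ nbhd G M).ncard : ℤ) := by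
    exact_mod_cast crit_pair_card hM.1 hB
  obtain ⟨-, hBc⟩ := decomp hM hB
  have hMB : ((M ∩ B).ncard : ℤ) = ((B ∩ M).ncard : ℤ) := by rw [Set.inter_comm]
  have hWM : (((M \ nbhd G B) ∪ B).ncard : ℤ) = (M.ncard : ℤ) := by linarith
  refine ⟨_, ⟨hWcrit, fun C hC => ?_⟩, Set.subset_union_right⟩
  have h1 : (C.ncard : ℤ) ≤ (((M \ nbhd G B) ∪ B).ncard : ℤ) := by
    rw [hWM]
    exact_mod_cast hM.2 C hC
  exact_mod_cast h1

lemma crit_subset_diadem {B : Set V} (hB : IsCritIndep G B) : B ⊆ diadem G :=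
  fun x hx => ⟨B, hB, hx⟩

lemma nucleus_eq : nucleus G = diadem G \ nbhd G (diadem G) := by
  ext x
  constructor
  · intro hx
    obtain ⟨M, hM⟩ := exists_maxcrit (G := G)
    have hxM : x ∈ M := hx M hM
    refine ⟨crit_subset_diadem hM.1 hxM, fun hxN => ?_⟩
    obtain ⟨y, hyD, hadj⟩ := hxN
    obtain ⟨B, hBcrit, hyB⟩ := hyD
    obtain ⟨W, hW, hBW⟩ := exists_max_superset hM hBcrit
    have hxW : x ∈ W := hx W hW
    exact hW.1.1 hxW (hBW hyB) hadj
  · rintro ⟨hxD, hxN⟩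
    intro M hM
    obtain ⟨B, hBcrit, hxB⟩ := hxD
    obtain ⟨heq, -⟩ := decomp hM hBcrit
    rw [← heq] at hxB
    rcases hxB with hx1 | hx2
    · exact absurd (nbhd_mono (crit_subset_diadem hM.1) hx1.2) hxN
    · exact hx2.2

lemma diadem_diff : diffOf G (diadem G) = critDiff G := by
  have hub := diffOf_le_critDiff (G := G) (diadem G)
  have key : ∀ (s : Finset (Set V)), (∀ A ∈ s, IsCritIndep G A) → s.Nonempty →
      critDiff G ≤ diffOf G (⋃₀ (↑s : Set (Set V))) := by
    classical
    intro s
    induction s using Finset.induction_on with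
    | empty => intro _ h; exact absurd h (by simp)
    | @insert A s hAs ih =>
      intro h _
      have hAc : IsCritIndep G A := h A (Finset.mem_insert_self _ _)
      by_cases hse : s.Nonempty
      · have hrest := ih (fun B hB => h B (Finset.mem_insert_of_mem hB)) hse
        have hsup := supermod (G := G) A (⋃₀ (↑s : Set (Set V)))
        have hint : diffOf G (A ∩ ⋃₀ (↑s : Set (Set V))) ≤ critDiff G :=
          indep_diffOf_le (indep_mono Set.inter_subset_left hAc.1)
        have hAd := hAc.2
        have hcoe : (↑(insert A s) : Set (Set V)) = insert A (↑s : Set (Set V)) := by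
          simp
        rw [hcoe, Set.sUnion_insert]
        linarith
      · have hempty : s = ∅ := Finset.not_nonempty_iff_eq_empty.1 hse
        subst hempty
        have hcoe : (↑(insert A (∅ : Finset (Set V))) : Set (Set V))
            = insert A (∅ : Set (Set V)) := by simp
        rw [hcoe, Set.sUnion_insert, Set.sUnion_empty, Set.union_empty]
        exact hAc.2.ge
  obtain ⟨A0, hA0⟩ := exists_crit (G := G)
  have hsfin : {A : Set V | IsCritIndep G A}.Finite := Set.toFinite _
  have hdia : diadem G = ⋃₀ (↑hsfin.toFinset : Set (Set V)) := by
    rw [Set.Finite.coe_toFinset]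
    rfl
  have hge : critDiff G ≤ diffOf G (diadem G) := by
    rw [hdia]
    exact key _ (fun A hA => hsfin.mem_toFinset.1 hA) ⟨A0, hsfin.mem_toFinset.2 hA0⟩
  omega

end Helpers

/-- For every finite simple graph `G`, `|N[diadem G]| = β(G) + |nucleus G| - d(G)`. -/
theorem stmt0 {V : Type*} [Fintype V] (G : SimpleGraph V) :
    ((closedNbhd G (diadem G)).ncard : ℤ) =
      ((diadem G).ncard : ℤ) + ((nucleus G).ncard : ℤ) - critDiff G := by
  have F1 : diffOf G (diadem G) = critDiff G := diadem_diff
  have F2 : nucleus G = diadem G \ nbhd G (diadem G) := nucleus_eq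
  have e1 : ((diadem G ∪ nbhd G (diadem G)).ncard : ℤ)
      + ((diadem G ∩ nbhd G (diadem G)).ncard : ℤ)
      = ((diadem G).ncard : ℤ) + ((nbhd G (diadem G)).ncard : ℤ) := by
    exact_mod_cast Set.ncard_union_add_ncard_inter _ _ (Set.toFinite _) (Set.toFinite _)
  have e2 : ((diadem G \ nbhd G (diadem G)).ncard : ℤ)
      + ((diadem G ∩ nbhd G (diadem G)).ncard : ℤ) = ((diadem G).ncard : ℤ) := by
    have : (diadem G \ nbhd G (diadem G)).ncard + (diadem G ∩ nbhd G (diadem G)).ncard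
        = (diadem G).ncard := by
      rw [← Set.diff_self_inter]
      exact Set.ncard_diff_add_ncard_of_subset Set.inter_subset_left (Set.toFinite _)
    exact_mod_cast this
  unfold diffOf at F1
  rw [F2]
  show ((diadem G ∪ nbhd G (diadem G)).ncard : ℤ) = _
  linarith
end

section
/- If G is an almost bipartite graph that is not a König-Egerváry graph, with unique odd cycle C, then V(C) ∩ N[diadem(G)] = ∅ (equivalently, N[V(C)] ∩ diadem(G) = ∅). -/
open AlmostBipartite

/-!
If a critical independent set `A` has `N[A]` meeting `V(C)`, put `W = V ∖ N[A]`. Every odd cycle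
has the edges of `C`, hence meets `N[A]`, so `G[W]` is bipartite, `W = X ∪ Y`. Criticality of `A`
gives Hall's condition for matching `N(A)` into `A` and `X` into `Y` (an independent `I ⊆ W` with
`|N(I) ∩ W| < |I|` would make `A ∪ I` beat `A`). The resulting matching of size `|N(A)| + |X|`
and the independent set `A ∪ Y` have sizes summing to `n(G)`, so `G` is König-Egerváry.
-/

namespace SimpleGraph.Walk

variable {V : Type*} {G : SimpleGraph V}

theorem exists_isCycle_of_odd_length {u : V} (p : G.Walk u u) (hp : Odd p.length) :
    ∃ (w : V) (q : G.Walk w w), q.IsCycle ∧ Odd q.length := by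
  induction hn : p.length using Nat.strong_induction_on generalizing u with
  | _ n ih =>
  cases p with
  | nil => simp at hp
  | cons hadj q =>
    by_cases hq : q.IsPath
    · refine ⟨_, cons hadj q, isCycle_iff_isPath_tail_and_le_length.mpr ⟨by simpa, ?_⟩, hp⟩
      obtain ⟨k, hk⟩ := hp
      rcases k with _ | k
      · cases q with
        | nil => exact absurd hadj G.irrefl
        | cons => simp at hk
      · omega
    -- a repeated vertex splits `p` into two shorter closed walks, one of which is odd
    · obtain ⟨x, r, ⟨a, b, rfl⟩, hr⟩ : ∃ (x : V) (r : G.Walk x x), r.IsSubwalk q ∧ ¬ r.Nil := by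
        simpa [isPath_iff_isSubwalk_imp_nil] using hq
      have hlen : (cons hadj (a.append b)).length + r.length = n := by
        simp only [length_cons, length_append] at hn ⊢; omega
      have hr0 : 0 < r.length := not_nil_iff_lt_length.mp hr
      rcases Nat.even_or_odd r.length with hr' | hr'
      · refine ih _ (by omega) (cons hadj (a.append b)) ?_ rfl
        rw [hn, ← hlen] at hp
        exact (Nat.odd_add.mp hp).mpr hr'
      · exact ih _ (by simp only [length_cons] at hlen; omega) r hr' rfl

end SimpleGraph.Walk

namespace SimpleGraph.Subgraph

variable {V : Type*} {G : SimpleGraph V} {M : G.Subgraph}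

open Classical in
/-- Junk value `s(v, v)` if `v` has no neighbour in `M`. -/
noncomputable def edgeAt (M : G.Subgraph) (v : V) : Sym2 V :=
  if h : ∃ w, M.Adj v w then s(v, h.choose) else s(v, v)

lemma IsMatching.edgeAt_eq (hM : M.IsMatching) {v w : V} (h : M.Adj v w) :
    M.edgeAt v = s(v, w) := by
  have hex : ∃ w, M.Adj v w := ⟨w, h⟩
  rw [edgeAt, dif_pos hex, hM.eq_of_adj_left hex.choose_spec h]

lemma IsMatching.ncard_le_ncard_edgeSet [Finite V] (hM : M.IsMatching) {s : Set V}
    (hs : s ⊆ M.verts) (hadj : ∀ ⦃a⦄, a ∈ s → ∀ ⦃b⦄, b ∈ s → ¬M.Adj a b) :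
    s.ncard ≤ M.edgeSet.ncard := by
  refine Set.ncard_le_ncard_of_injOn M.edgeAt (fun v hv => ?_) (fun a ha b hb hab => ?_)
  · obtain ⟨w, hw, -⟩ := hM (hs hv)
    rwa [hM.edgeAt_eq hw]
  · obtain ⟨a', ha', -⟩ := hM (hs ha)
    obtain ⟨b', hb', -⟩ := hM (hs hb)
    rw [hM.edgeAt_eq ha', hM.edgeAt_eq hb'] at hab
    rcases Sym2.eq_iff.mp hab with ⟨rfl, -⟩ | ⟨rfl, rfl⟩
    · rfl
    · exact absurd hb' (hadj hb ha)

lemma IsMatching.ncard_edgeSet_le_ncard [Finite V] (hM : M.IsMatching) {t : Set V}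
    (ht : ∀ ⦃a b⦄, M.Adj a b → a ∈ t ∨ b ∈ t) : M.edgeSet.ncard ≤ t.ncard := by
  refine (Set.ncard_le_ncard ?_).trans (Set.ncard_image_le (f := M.edgeAt))
  intro e he
  induction e using Sym2.ind with
  | _ a b =>
    rcases ht he with ha | hb
    · exact ⟨a, ha, hM.edgeAt_eq he⟩
    · exact ⟨b, hb, (hM.edgeAt_eq he.symm).trans Sym2.eq_swap⟩

end SimpleGraph.Subgraph

namespace AlmostBipartite

variable {V : Type*} {G : SimpleGraph V}

lemma nbhd_mono {S T : Set V} (h : S ⊆ T) : nbhd G S ⊆ nbhd G T :=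
  fun _ ⟨x, hx, hvx⟩ => ⟨x, h hx, hvx⟩

lemma nbhd_union (S T : Set V) : nbhd G (S ∪ T) = nbhd G S ∪ nbhd G T := by
  ext v
  simp only [nbhd, Set.mem_union, Set.mem_ofPred_eq]
  grind

lemma mem_closedNbhd_sUnion {𝒜 : Set (Set V)} {v : V} :
    v ∈ closedNbhd G (⋃₀ 𝒜) ↔ ∃ A ∈ 𝒜, v ∈ closedNbhd G A := by
  simp only [closedNbhd, nbhd, Set.mem_union, Set.mem_sUnion, Set.mem_ofPred_eq]
  grind

lemma closedNbhd_inter_eq_empty_comm {S T : Set V} :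
    closedNbhd G S ∩ T = ∅ ↔ S ∩ closedNbhd G T = ∅ := by
  simp only [Set.eq_empty_iff_forall_notMem, closedNbhd, nbhd, Set.mem_inter_iff,
    Set.mem_union, Set.mem_ofPred_eq]
  grind [G.adj_symm]

lemma IsIndepSet.union_of_subset_compl_closedNbhd {A I : Set V} (hA : IsIndepSet G A)
    (hI : IsIndepSet G I) (hIA : I ⊆ (closedNbhd G A)ᶜ) : IsIndepSet G (A ∪ I) := by
  have hAI : ∀ ⦃a⦄, a ∈ A → ∀ ⦃i⦄, i ∈ I → ¬G.Adj a i :=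
    fun a ha i hi hai => hIA hi (Or.inr ⟨a, ha, hai.symm⟩)
  rintro a (ha | ha) b (hb | hb)
  exacts [hA ha hb, hAI ha hb, fun h => hAI hb ha h.symm, hI ha hb]

section Critical

variable [Finite V]

lemma diffOf_le_critDiff {S : Set V} (hS : IsIndepSet G S) : diffOf G S ≤ critDiff G :=
  le_csSup ((Set.toFinite _).image _).bddAbove (Set.mem_image_of_mem _ hS)

lemma IsCritIndep.ncard_le_ncard_nbhd_inter {A S : Set V} (hA : IsCritIndep G A)
    (hS : S ⊆ nbhd G A) : S.ncard ≤ (nbhd G S ∩ A).ncard := by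
  have hd : diffOf G (A \ nbhd G S) ≤ diffOf G A :=
    (diffOf_le_critDiff fun _ ha _ hb => hA.1 ha.1 hb.1).trans_eq hA.2.symm
  have hsub : nbhd G (A \ nbhd G S) ⊆ nbhd G A \ S :=
    fun v ⟨x, hx, hvx⟩ => ⟨⟨x, hx.1, hvx⟩, fun hvS => hx.2 ⟨v, hvS, hvx.symm⟩⟩
  have h₁ := Set.ncard_inter_add_ncard_sdiff_eq_ncard A (nbhd G S)
  have h₂ := Set.ncard_le_ncard hsub
  have h₃ := Set.ncard_sdiff_add_ncard_of_subset hS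
  rw [Set.inter_comm] at h₁
  simp only [diffOf] at hd
  omega

lemma IsCritIndep.ncard_le_ncard_nbhd_diff {A I : Set V} (hA : IsCritIndep G A)
    (hI : IsIndepSet G I) (hIA : I ⊆ (closedNbhd G A)ᶜ) :
    I.ncard ≤ (nbhd G I \ closedNbhd G A).ncard := by
  have hd : diffOf G (A ∪ I) ≤ diffOf G A :=
    (diffOf_le_critDiff (hA.1.union_of_subset_compl_closedNbhd hI hIA)).trans_eq hA.2.symm
  have hsub : nbhd G (A ∪ I) ⊆ nbhd G A ∪ (nbhd G I \ closedNbhd G A) := by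
    rw [nbhd_union]
    rintro v (hv | ⟨i, hi, hvi⟩)
    · exact Or.inl hv
    by_cases hvA : v ∈ closedNbhd G A
    · rcases hvA with hvA | hvA
      · exact absurd (Or.inr ⟨v, hvA, hvi.symm⟩) (hIA hi)
      · exact Or.inl hvA
    · exact Or.inr ⟨⟨i, hi, hvi⟩, hvA⟩
  have hdisj : Disjoint A I :=
    Set.disjoint_right.mpr fun i hi hiA => hIA hi (Or.inl hiA)
  have h₁ := Set.ncard_union_eq hdisj
  have h₂ := (Set.ncard_le_ncard hsub).trans (Set.ncard_union_le _ _)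
  simp only [diffOf] at hd
  omega

end Critical

lemma ncard_le_ncard_nbhd_inter_union [Finite V] {L₁ L₂ R₁ R₂ : Set V} (hR : Disjoint R₁ R₂)
    (h₁ : ∀ s ⊆ L₁, s.ncard ≤ (nbhd G s ∩ R₁).ncard)
    (h₂ : ∀ s ⊆ L₂, s.ncard ≤ (nbhd G s ∩ R₂).ncard) {s : Set V} (hs : s ⊆ L₁ ∪ L₂) :
    s.ncard ≤ (nbhd G s ∩ (R₁ ∪ R₂)).ncard := by
  have hsplit : s ∩ L₁ ∪ s ∩ L₂ = s := by
    rw [← Set.inter_union_distrib_left, Set.inter_eq_left.mpr hs]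
  calc s.ncard = (s ∩ L₁ ∪ s ∩ L₂).ncard := by rw [hsplit]
    _ ≤ (s ∩ L₁).ncard + (s ∩ L₂).ncard := Set.ncard_union_le _ _
    _ ≤ (nbhd G (s ∩ L₁) ∩ R₁).ncard + (nbhd G (s ∩ L₂) ∩ R₂).ncard :=
      add_le_add (h₁ _ Set.inter_subset_right) (h₂ _ Set.inter_subset_right)
    _ = (nbhd G (s ∩ L₁) ∩ R₁ ∪ nbhd G (s ∩ L₂) ∩ R₂).ncard :=
      (Set.ncard_union_eq (hR.mono Set.inter_subset_right Set.inter_subset_right)).symm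
    _ ≤ (nbhd G s ∩ (R₁ ∪ R₂)).ncard := by
      refine Set.ncard_le_ncard (Set.union_subset ?_ ?_)
      · exact Set.inter_subset_inter (nbhd_mono Set.inter_subset_left) Set.subset_union_left
      · exact Set.inter_subset_inter (nbhd_mono Set.inter_subset_left) Set.subset_union_right

/-- Hall's marriage theorem. -/
lemma exists_isMatching_ncard_le [Finite V] {L R : Set V} (hLR : Disjoint L R)
    (hall : ∀ s ⊆ L, s.ncard ≤ (nbhd G s ∩ R).ncard) :
    ∃ M : G.Subgraph, M.IsMatching ∧ L.ncard ≤ M.edgeSet.ncard := by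
  classical
  have := Fintype.ofFinite V
  obtain ⟨M, hLM, hM⟩ := SimpleGraph.exists_isMatching_of_forall_ncard_le
    (SimpleGraph.between_isBipartiteWith (G := G) hLR) fun s hs =>
      (hall s hs).trans <| Set.ncard_le_ncard fun v ⟨⟨x, hx, hvx⟩, hvR⟩ =>
        Set.mem_biUnion hx ⟨hvx.symm, Or.inl ⟨hs hx, hvR⟩⟩
  have hM' := hM.map_ofLE SimpleGraph.between_le
  refine ⟨_, hM', hM'.ncard_le_ncard_edgeSet (by simpa using hLM) fun a ha b hb hab => ?_⟩
  obtain ⟨a, b, hab, rfl, rfl⟩ := hab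
  rcases (M.adj_sub hab).2 with ⟨-, hbR⟩ | ⟨haR, -⟩
  exacts [hLR.notMem_of_mem_left hb hbR, hLR.notMem_of_mem_left ha haR]

section KonigEgervary

variable [Finite V]

lemma bddAbove_indepSet_ncard : BddAbove {n | ∃ S : Set V, IsIndepSet G S ∧ S.ncard = n} :=
  ⟨Nat.card V, by rintro _ ⟨S, -, rfl⟩; exact Set.ncard_le_card S⟩

lemma bddAbove_matching_ncard :
    BddAbove {n | ∃ M : G.Subgraph, M.IsMatching ∧ M.edgeSet.ncard = n} :=
  ⟨Nat.card (Sym2 V), by rintro _ ⟨M, -, rfl⟩; exact Set.ncard_le_card _⟩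

lemma IsIndepSet.ncard_le_indepNum {S : Set V} (hS : IsIndepSet G S) : S.ncard ≤ indepNum G :=
  le_csSup bddAbove_indepSet_ncard ⟨S, hS, rfl⟩

lemma ncard_edgeSet_le_matchNum {M : G.Subgraph} (hM : M.IsMatching) :
    M.edgeSet.ncard ≤ matchNum G :=
  le_csSup bddAbove_matching_ncard ⟨M, hM, rfl⟩

lemma exists_isIndepSet_ncard_eq_indepNum : ∃ S : Set V, IsIndepSet G S ∧ S.ncard = indepNum G :=
  Nat.sSup_mem (s := {n | ∃ S : Set V, IsIndepSet G S ∧ S.ncard = n})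
    ⟨0, ∅, fun _ h => absurd h (Set.notMem_empty _), Set.ncard_empty V⟩ bddAbove_indepSet_ncard

lemma exists_isMatching_ncard_eq_matchNum :
    ∃ M : G.Subgraph, M.IsMatching ∧ M.edgeSet.ncard = matchNum G :=
  Nat.sSup_mem (s := {n | ∃ M : G.Subgraph, M.IsMatching ∧ M.edgeSet.ncard = n})
    ⟨0, ⊥, fun _ h => absurd h (Set.notMem_empty _), by simp⟩ bddAbove_matching_ncard

lemma indepNum_add_matchNum_le : indepNum G + matchNum G ≤ Nat.card V := by
  obtain ⟨S, hS, hSα⟩ := exists_isIndepSet_ncard_eq_indepNum (G := G)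
  obtain ⟨M, hM, hMμ⟩ := exists_isMatching_ncard_eq_matchNum (G := G)
  have hMS : M.edgeSet.ncard ≤ Sᶜ.ncard := hM.ncard_edgeSet_le_ncard fun a b hab => by
    by_contra! h
    exact hS (not_not.mp h.1) (not_not.mp h.2) (M.adj_sub hab)
  have := Set.ncard_add_ncard_compl S
  omega

lemma konigEgervary_of_le {S : Set V} {M : G.Subgraph} (hS : IsIndepSet G S) (hM : M.IsMatching)
    (h : Nat.card V ≤ S.ncard + M.edgeSet.ncard) : KonigEgervary G :=
  le_antisymm indepNum_add_matchNum_le <|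
    h.trans (add_le_add hS.ncard_le_indepNum (ncard_edgeSet_le_matchNum hM))

end KonigEgervary

lemma isBipartite_induce_of_forall_odd_cycle {W : Set V}
    (h : ∀ (w : V) (q : G.Walk w w), q.IsCycle → Odd q.length → ∃ v ∈ q.support, v ∉ W) :
    (G.induce W).IsBipartite := by
  refine SimpleGraph.two_colorable_iff_forall_loop_even.mpr fun _ p =>
    Nat.not_odd_iff_even.mp fun hp => ?_
  obtain ⟨w, q, hq, hodd⟩ := p.exists_isCycle_of_odd_length hp
  let f := (SimpleGraph.Embedding.induce (G := G) W).toHom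
  have hf : Function.Injective f := (SimpleGraph.Embedding.induce (G := G) W).injective
  obtain ⟨v, hv, hvW⟩ := h _ (q.map f) ((SimpleGraph.Walk.isCycle_map_iff_of_injective hf).mpr hq)
    (by rwa [SimpleGraph.Walk.length_map])
  obtain ⟨y, -, rfl⟩ := List.mem_map.mp (SimpleGraph.Walk.support_map f q ▸ hv)
  exact hvW y.2

lemma exists_isIndepSet_sdiff_of_isBipartite_induce {W : Set V} (h : (G.induce W).IsBipartite) :
    ∃ X ⊆ W, IsIndepSet G X ∧ IsIndepSet G (W \ X) := by
  obtain ⟨C⟩ := h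
  refine ⟨{v | ∃ hv : v ∈ W, C ⟨v, hv⟩ = 0}, fun v ⟨hv, _⟩ => hv, ?_, ?_⟩
  · rintro a ⟨ha, hCa⟩ b ⟨hb, hCb⟩ hab
    exact C.valid (G := G.induce W) (v := ⟨a, ha⟩) (w := ⟨b, hb⟩) hab (hCa.trans hCb.symm)
  · rintro a ⟨ha, hCa⟩ b ⟨hb, hCb⟩ hab
    refine C.valid (G := G.induce W) (v := ⟨a, ha⟩) (w := ⟨b, hb⟩) hab ?_
    have hCa' : C ⟨a, ha⟩ ≠ 0 := fun h => hCa ⟨ha, h⟩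
    have hCb' : C ⟨b, hb⟩ ≠ 0 := fun h => hCb ⟨hb, h⟩
    omega

lemma IsUniqueOddCycle.mem_support {u : V} {c : G.Walk u u} (hc : IsUniqueOddCycle G c)
    {v : V} (hv : v ∈ c.support) {w : V} {q : G.Walk w w} (hq : q.IsCycle) (hodd : Odd q.length) :
    v ∈ q.support := by
  obtain ⟨e, he, hve⟩ :=
    (SimpleGraph.Walk.mem_support_iff_exists_mem_edges_of_not_nil hc.1.1.not_nil).mp hv
  have he' : e ∈ {e | e ∈ q.edges} := (hc.2 w q ⟨hq, hodd⟩).symm ▸ he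
  exact SimpleGraph.Walk.mem_support_of_mem_edges he' hve

theorem konigEgervary_of_mem_support_closedNbhd [Finite V] {u : V} {c : G.Walk u u}
    (hc : IsUniqueOddCycle G c) {A : Set V} (hA : IsCritIndep G A) {v : V}
    (hv : v ∈ c.support) (hvA : v ∈ closedNbhd G A) : KonigEgervary G := by
  set W := (closedNbhd G A)ᶜ
  obtain ⟨X, hXW, hX, hY⟩ := exists_isIndepSet_sdiff_of_isBipartite_induce
    (isBipartite_induce_of_forall_odd_cycle (G := G) (W := W) fun _ _ hq hodd =>
      ⟨v, hc.mem_support hv hq hodd, not_not.mpr hvA⟩)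
  have hAY : Disjoint A (W \ X) :=
    Set.disjoint_right.mpr fun y hy hyA => hy.1 (Or.inl hyA)
  have hLR : Disjoint (nbhd G A ∪ X) (A ∪ W \ X) := by
    refine Set.disjoint_union_left.mpr ⟨Set.disjoint_union_right.mpr ⟨?_, ?_⟩, ?_⟩
    · exact Set.disjoint_left.mpr fun x ⟨a, ha, hxa⟩ hxA => hA.1 hxA ha hxa
    · exact Set.disjoint_left.mpr fun x hx hxY => hxY.1 (Or.inr hx)
    · exact Set.disjoint_union_right.mpr ⟨Set.disjoint_left.mpr fun x hx hxA =>
        hXW hx (Or.inl hxA), Set.disjoint_sdiff_right⟩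
  have hallX : ∀ s ⊆ X, s.ncard ≤ (nbhd G s ∩ (W \ X)).ncard := fun s hs =>
    (hA.ncard_le_ncard_nbhd_diff (fun _ ha _ hb => hX (hs ha) (hs hb)) (hs.trans hXW)).trans <|
      Set.ncard_le_ncard fun y ⟨⟨x, hx, hyx⟩, hyA⟩ =>
        ⟨⟨x, hx, hyx⟩, hyA, fun hyX => hX hyX (hs hx) hyx⟩
  obtain ⟨M, hM, hLM⟩ := exists_isMatching_ncard_le hLR fun s hs =>
    ncard_le_ncard_nbhd_inter_union hAY (fun _ => hA.ncard_le_ncard_nbhd_inter) hallX hs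
  have hcover : nbhd G A ∪ X ∪ (A ∪ W \ X) = Set.univ := by
    ext x
    by_cases hxA : x ∈ closedNbhd G A
    · rcases hxA with hxA | hxA <;> simp [hxA]
    · by_cases hxX : x ∈ X <;> simp [hxX, W, hxA]
  refine konigEgervary_of_le (hA.1.union_of_subset_compl_closedNbhd hY Set.sdiff_subset) hM ?_
  calc Nat.card V = (nbhd G A ∪ X ∪ (A ∪ W \ X)).ncard := by rw [hcover, Set.ncard_univ]
    _ ≤ (nbhd G A ∪ X).ncard + (A ∪ W \ X).ncard := Set.ncard_union_le _ _
    _ ≤ (A ∪ W \ X).ncard + M.edgeSet.ncard := by omega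

end AlmostBipartite

open AlmostBipartite in
/-- If `G` is an almost bipartite non-König-Egerváry graph with unique odd cycle `c`, then
`V(C) ∩ N[diadem G] = ∅`; equivalently, `N[V(C)] ∩ diadem G = ∅`. -/
theorem stmt1 {V : Type*} [Fintype V] (G : SimpleGraph V) (hG : ¬ KonigEgervary G)
    (u : V) (c : G.Walk u u) (hc : IsUniqueOddCycle G c) :
    {v | v ∈ c.support} ∩ closedNbhd G (diadem G) = ∅ ∧
    closedNbhd G {v | v ∈ c.support} ∩ diadem G = ∅ := by
  have hcycle : {v | v ∈ c.support} ∩ closedNbhd G (diadem G) = ∅ := by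
    refine Set.eq_empty_iff_forall_notMem.mpr fun v ⟨hv, hvD⟩ => ?_
    obtain ⟨A, hA, hvA⟩ := mem_closedNbhd_sUnion.mp hvD
    exact hG (konigEgervary_of_mem_support_closedNbhd hc hA hv hvA)
  exact ⟨hcycle, closedNbhd_inter_eq_empty_comm.mpr hcycle⟩
end

section
/- Let G be a finite simple graph and v ∈ V(G). If there exists an independent set of the vertex-deleted subgraph G − v that is a critical independent set of G − v but is not a critical independent set of G, then d(G) ≥ d(G − v). -/
open AlmostBipartite

/-- If there exists an independent set of `G - v` that is critical in `G - v` but not critical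
in `G`, then `d(G) ≥ d(G - v)`. -/
theorem stmt9 {V : Type*} [Fintype V] (G : SimpleGraph V) (v : V)
    (h : ∃ B, IsCritIndep (deleteVert G v) B ∧ ¬ IsCritIndep G (Subtype.val '' B)) :
    critDiff G ≥ critDiff (deleteVert G v) := by
  classical
  obtain ⟨B, ⟨hBind, hBcrit⟩, hnot⟩ := h
  set B' : Set V := Subtype.val '' B with hB'
  have hB'ind : IsIndepSet G B' := by
    rintro a ⟨a', ha', rfl⟩ b ⟨b', hb', rfl⟩ hadj
    exact hBind ha' hb' hadj
  have hbdd : BddAbove (diffOf G '' {S | IsIndepSet G S}) := by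
    refine ⟨(Nat.card V : ℤ), ?_⟩
    rintro x ⟨S, _, rfl⟩
    have h1 : S.ncard ≤ Nat.card V := by
      simpa [Set.ncard_univ] using Set.ncard_le_ncard (Set.subset_univ S) Set.finite_univ
    have h2 : diffOf G S ≤ (S.ncard : ℤ) := sub_le_self _ (by positivity)
    exact h2.trans (by exact_mod_cast h1)
  have hle : diffOf G B' ≤ critDiff G := le_csSup hbdd ⟨B', hB'ind, rfl⟩
  have hlt : diffOf G B' < critDiff G :=
    lt_of_le_of_ne hle (fun he => hnot ⟨hB'ind, he⟩)
  have hsub : nbhd G B' ⊆ insert v (Subtype.val '' (nbhd (deleteVert G v) B)) := by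
    rintro w ⟨x, ⟨x', hx', rfl⟩, hadj⟩
    rcases eq_or_ne w v with rfl | hw
    · exact Set.mem_insert _ _
    · exact Set.mem_insert_iff.mpr (Or.inr ⟨⟨w, hw⟩, ⟨x', hx', hadj⟩, rfl⟩)
  have hncard : (nbhd G B').ncard ≤ (nbhd (deleteVert G v) B).ncard + 1 := by
    calc (nbhd G B').ncard
        ≤ (insert v (Subtype.val '' (nbhd (deleteVert G v) B))).ncard :=
          Set.ncard_le_ncard hsub (Set.toFinite _)
      _ ≤ (Subtype.val '' (nbhd (deleteVert G v) B)).ncard + 1 := Set.ncard_insert_le _ _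
      _ = (nbhd (deleteVert G v) B).ncard + 1 := by
          rw [Set.ncard_image_of_injective _ Subtype.val_injective]
  have hcardB : B'.ncard = B.ncard := Set.ncard_image_of_injective _ Subtype.val_injective
  have hdiff : diffOf (deleteVert G v) B ≤ diffOf G B' + 1 := by
    unfold diffOf
    rw [hcardB]
    omega
  calc critDiff (deleteVert G v) = diffOf (deleteVert G v) B := hBcrit.symm
    _ ≤ diffOf G B' + 1 := hdiff
    _ ≤ critDiff G := by omega
end
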